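/- Under the uniform distribution on S_5, the joint distribution of the pair (d_{C,1}, d_{C,2}) of Cayley distances, where d_{C,t}(σ) := d_C(π_t(σ), π_{t+1}(σ)), is given on {0,1,2}² by (1/60) times the matrix with rows (1,1,3), (1,5,14), (3,14,18), and the Pearson correlation of d_{C,1} and d_{C,2} equals −2/25. The joint distribution of (d_{K,1}, d_{K,2}), where d_{K,t}(σ) := d_K(π_t(σ), π_{t+1}(σ)), is given on {0,1,2,3}² by (1/60) times the matrix with rows (1,1,3,0), (1,1,7,1), (3,7,18,7), (0,1,7,2), and the Pearson correlation of d_{K,1} and d_{K,2} equals 22/115. -/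

import Mathlib

open Equiv

/-- The transcript of an ordered pair of permutations: `τ(π₁,π₂) = π₁⁻¹ ∘ π₂`. -/
def transcript {m : ℕ} (π₁ π₂ : Perm (Fin m)) : Perm (Fin m) := π₁⁻¹ * π₂

/-- The ordinal pattern of a triple `y` with pairwise distinct entries: the unique
permutation `π ∈ S_3` with `y (π 0) < y (π 1) < y (π 2)`. -/
noncomputable def opattern {α : Type*} [LinearOrder α] (y : Fin 3 → α) : Perm (Fin 3) :=
  if h : ∃ π : Perm (Fin 3), y (π 0) < y (π 1) ∧ y (π 1) < y (π 2) then h.choose else 1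

/-- For `σ ∈ S_N`, viewed as the tuple `(σ 0, …, σ (N-1))`, the ordinal pattern of
the window `(σ t, σ (t+1), σ (t+2))` (0-based `t`). -/
noncomputable def patN {N : ℕ} (σ : Perm (Fin N)) (t : ℕ) (h : t + 2 < N) : Perm (Fin 3) :=
  opattern fun i : Fin 3 => σ ⟨t + i, by have := i.isLt; omega⟩

/-- The lag-1 transcript of the ordinal patterns at (0-based) windows `t` and `t+1`;
this is `τ_{t+1}` in the 1-based numbering of the paper. -/
noncomputable def tauN {N : ℕ} (σ : Perm (Fin N)) (t : ℕ) (h : t + 3 < N) : Perm (Fin 3) :=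
  transcript (patN σ t (by omega)) (patN σ (t + 1) (by omega))

/-- `π^[1] = (1,2,3)`, the identity. -/
def p1 : Perm (Fin 3) := 1
/-- `π^[2] = (1,3,2)`. -/
def p2 : Perm (Fin 3) := Equiv.swap 1 2
/-- `π^[3] = (2,1,3)`. -/
def p3 : Perm (Fin 3) := Equiv.swap 0 1
/-- `π^[4] = (2,3,1)`, i.e. `0 ↦ 1 ↦ 2 ↦ 0`. -/
def p4 : Perm (Fin 3) := Equiv.swap 0 1 * Equiv.swap 1 2
/-- `π^[5] = (3,1,2)`, i.e. `0 ↦ 2 ↦ 1 ↦ 0`. -/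
def p5 : Perm (Fin 3) := Equiv.swap 1 2 * Equiv.swap 0 1
/-- `π^[6] = (3,2,1)`. -/
def p6 : Perm (Fin 3) := Equiv.swap 0 2

/-- The labelling `k ↦ π^[k+1]` of the six elements of `S_3`. -/
def lab : Fin 6 → Perm (Fin 3) := ![p1, p2, p3, p4, p5, p6]

/-- A permutation of `{1,…,m}` is an adjacent transposition if it is a
transposition of the form `(i, i+1)`. -/
def IsAdjSwap {m : ℕ} (s : Perm (Fin m)) : Prop :=
  ∃ i : ℕ, ∃ h : i + 1 < m, s = Equiv.swap ⟨i, Nat.lt_of_succ_lt h⟩ ⟨i + 1, h⟩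

/-- The Cayley distance: the least `k` such that the transcript of `π₁, π₂` is a
product of `k` transpositions. -/
noncomputable def dC {m : ℕ} (π₁ π₂ : Perm (Fin m)) : ℕ :=
  sInf {k : ℕ | ∃ l : List (Perm (Fin m)), l.length = k ∧ (∀ s ∈ l, s.IsSwap) ∧
    l.prod = transcript π₁ π₂}

/-- The Kendall distance: the least `k` such that the transcript of `π₁, π₂` is a
product of `k` adjacent transpositions. -/
noncomputable def dK {m : ℕ} (π₁ π₂ : Perm (Fin m)) : ℕ :=
  sInf {k : ℕ | ∃ l : List (Perm (Fin m)), l.length = k ∧ (∀ s ∈ l, IsAdjSwap s) ∧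
    l.prod = transcript π₁ π₂}

/-- `d_{C,1}(σ)`: the Cayley distance of the first pair of successive ordinal
patterns of `σ ∈ S_5`. -/
noncomputable def dC1 (σ : Perm (Fin 5)) : ℕ := dC (patN σ 0 (by omega)) (patN σ 1 (by omega))
/-- `d_{C,2}(σ)`. -/
noncomputable def dC2 (σ : Perm (Fin 5)) : ℕ := dC (patN σ 1 (by omega)) (patN σ 2 (by omega))
/-- `d_{K,1}(σ)`. -/
noncomputable def dK1 (σ : Perm (Fin 5)) : ℕ := dK (patN σ 0 (by omega)) (patN σ 1 (by omega))
/-- `d_{K,2}(σ)`. -/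
noncomputable def dK2 (σ : Perm (Fin 5)) : ℕ := dK (patN σ 1 (by omega)) (patN σ 2 (by omega))

/-- Expectation under the uniform distribution on `S_5`. -/
noncomputable def EX (f : Perm (Fin 5) → ℕ) : ℝ := (∑ σ : Perm (Fin 5), (f σ : ℝ)) / 120

/-- Covariance under the uniform distribution on `S_5`. -/
noncomputable def Cov (f g : Perm (Fin 5) → ℕ) : ℝ :=
  (∑ σ : Perm (Fin 5), ((f σ : ℝ) - EX f) * ((g σ : ℝ) - EX g)) / 120

/-!
The statistics `d_{C,t}` and `d_{K,t}` only see the ordinal patterns of the three windows of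
`σ ∈ S_5`, and these are computed by comparisons. In `S_3` both distances are word lengths
that can be tabulated: each value is attained by an explicit word, and it is minimal because a
product of `k` transpositions has sign `(-1)^k`, which rules out every shorter word except the
trivial and one-letter ones. The joint laws are then counts over the 120 permutations, and the
correlations are moments of these finite joint laws.
-/

theorem opattern_eq {α : Type*} [LinearOrder α] {y : Fin 3 → α} {π : Perm (Fin 3)}
    (h₀₁ : y (π 0) < y (π 1)) (h₁₂ : y (π 1) < y (π 2)) : opattern y = π := by
  have hex : ∃ ρ : Perm (Fin 3), y (ρ 0) < y (ρ 1) ∧ y (ρ 1) < y (ρ 2) := ⟨π, h₀₁, h₁₂⟩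
  have mono : ∀ ρ : Perm (Fin 3), y (ρ 0) < y (ρ 1) → y (ρ 1) < y (ρ 2) → StrictMono (y ∘ ρ) :=
    fun ρ h h' => Fin.strictMono_iff_lt_succ.2 fun i => by fin_cases i <;> assumption
  obtain ⟨hρ₀₁, hρ₁₂⟩ := hex.choose_spec
  have hπ := mono π h₀₁ h₁₂
  -- two strictly monotone enumerations of the same range coincide
  have heq : y ∘ hex.choose = y ∘ π := by
    rw [← (mono _ hρ₀₁ hρ₁₂).range_inj hπ, Set.range_comp, Set.range_comp,
      EquivLike.range_eq_univ, EquivLike.range_eq_univ]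
  have hy : Function.Injective y := by
    simpa [Function.comp_assoc] using hπ.injective.comp π.symm.injective
  rw [opattern, dif_pos hex]
  exact Equiv.ext fun i => hy (congrFun heq i)

/-- For injective `y` this computes `opattern y` (which is defined by choice), so that counts over
`S_5` can be evaluated by `decide`. -/
def opatternTree {α : Type*} [LinearOrder α] (y : Fin 3 → α) : Perm (Fin 3) :=
  if y 0 < y 1 then (if y 1 < y 2 then p1 else if y 0 < y 2 then p2 else p5)
  else (if y 1 < y 2 then (if y 0 < y 2 then p3 else p4) else p6)

theorem opattern_eq_opatternTree {α : Type*} [LinearOrder α] {y : Fin 3 → α}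
    (hy : Function.Injective y) : opattern y = opatternTree y := by
  have h₀₁ : y 0 ≠ y 1 := hy.ne (by decide)
  have h₀₂ : y 0 ≠ y 2 := hy.ne (by decide)
  have h₁₂ : y 1 ≠ y 2 := hy.ne (by decide)
  unfold opatternTree
  split_ifs <;> apply opattern_eq <;>
    simp [p1, p2, p3, p4, p5, p6, Perm.mul_apply, swap_apply_def] <;> order

section WordLength

variable {G : Type*} [Monoid G] (P : G → Prop)

noncomputable def wordLength (g : G) : ℕ :=
  sInf {k | ∃ l : List G, l.length = k ∧ (∀ s ∈ l, P s) ∧ l.prod = g}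

variable {P}

theorem wordLength_eq {g : G} {n : ℕ} (l : List G) (hl : ∀ s ∈ l, P s) (hprod : l.prod = g)
    (hlen : l.length = n) (hmin : ∀ l' : List G, (∀ s ∈ l', P s) → l'.prod = g → n ≤ l'.length) :
    wordLength P g = n := by
  refine le_antisymm (Nat.sInf_le ⟨l, hlen, hl, hprod⟩) ?_
  exact le_csInf ⟨n, l, hlen, hl, hprod⟩ fun k ⟨l', hk, hl', hprod'⟩ => hk ▸ hmin l' hl' hprod'

theorem one_le_length_of_prod_ne_one {l : List G} (h : l.prod ≠ 1) : 1 ≤ l.length := by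
  rcases l with _ | ⟨s, l⟩
  · exact absurd List.prod_nil h
  · simp

end WordLength

section SwapWords

variable {α : Type*} [DecidableEq α] [Fintype α] {l : List (Perm α)}

theorem two_le_length_of_sign_eq_one (hl : ∀ s ∈ l, s.IsSwap) (h₁ : l.prod ≠ 1)
    (hsign : Perm.sign l.prod = 1) : 2 ≤ l.length := by
  rcases l with _ | ⟨s, _ | ⟨t, l⟩⟩
  · exact absurd List.prod_nil h₁
  · simp [(hl s (by simp)).sign_eq] at hsign
  · simp

theorem three_le_length_of_sign_eq_neg_one {P : Perm α → Prop} (hP : ∀ s, P s → s.IsSwap)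
    (hl : ∀ s ∈ l, P s) (hnot : ¬ P l.prod) (hsign : Perm.sign l.prod = -1) : 3 ≤ l.length := by
  rcases l with _ | ⟨s, _ | ⟨t, _ | ⟨u, l⟩⟩⟩
  · simp at hsign
  · exact absurd (by simpa using hl s (by simp)) hnot
  · simp [(hP s (hl s (by simp))).sign_eq, (hP t (hl t (by simp))).sign_eq] at hsign
  · simp

end SwapWords

theorem IsAdjSwap.isSwap {m : ℕ} {s : Perm (Fin m)} (h : IsAdjSwap s) : s.IsSwap := by
  obtain ⟨i, hi, rfl⟩ := h
  exact Perm.swap_isSwap_iff.2 (by simp [Fin.ext_iff])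

theorem isAdjSwap_fin3_iff {s : Perm (Fin 3)} : IsAdjSwap s ↔ s = swap 0 1 ∨ s = swap 1 2 := by
  constructor
  · rintro ⟨i, hi, rfl⟩
    have : i < 2 := by omega
    interval_cases i <;> simp
  · rintro (rfl | rfl)
    exacts [⟨0, by omega, rfl⟩, ⟨1, by omega, rfl⟩]

theorem perm_fin3_cases (τ : Perm (Fin 3)) :
    τ = p1 ∨ τ = p2 ∨ τ = p3 ∨ τ = p4 ∨ τ = p5 ∨ τ = p6 := by
  revert τ; decide

def cayleyFin3 (τ : Perm (Fin 3)) : ℕ :=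
  if τ = 1 then 0 else if τ = p4 ∨ τ = p5 then 2 else 1

def kendallFin3 (τ : Perm (Fin 3)) : ℕ :=
  if τ = 1 then 0 else if τ = p2 ∨ τ = p3 then 1 else if τ = p6 then 3 else 2

theorem wordLength_isSwap_fin3 (τ : Perm (Fin 3)) : wordLength Perm.IsSwap τ = cayleyFin3 τ := by
  have nonzero : ∀ l : List (Perm (Fin 3)), l.prod = τ → τ ≠ 1 → 1 ≤ l.length :=
    fun l h hτ => one_le_length_of_prod_ne_one (h ▸ hτ)
  rcases perm_fin3_cases τ with rfl | rfl | rfl | rfl | rfl | rfl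
  · exact wordLength_eq [] (by simp) rfl rfl fun _ _ _ => Nat.zero_le _
  · exact wordLength_eq [swap 1 2] (by simp [Perm.swap_isSwap_iff]) (by simp [p2]) rfl
      fun l _ h => nonzero l h (by decide)
  · exact wordLength_eq [swap 0 1] (by simp [Perm.swap_isSwap_iff]) (by simp [p3]) rfl
      fun l _ h => nonzero l h (by decide)
  · exact wordLength_eq [swap 0 1, swap 1 2] (by simp [Perm.swap_isSwap_iff]) (by simp [p4]) rfl
      fun l hl h => two_le_length_of_sign_eq_one hl (h ▸ by decide) (h ▸ by decide)
  · exact wordLength_eq [swap 1 2, swap 0 1] (by simp [Perm.swap_isSwap_iff]) (by simp [p5]) rfl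
      fun l hl h => two_le_length_of_sign_eq_one hl (h ▸ by decide) (h ▸ by decide)
  · exact wordLength_eq [swap 0 2] (by simp [Perm.swap_isSwap_iff]) (by simp [p6]) rfl
      fun l _ h => nonzero l h (by decide)

theorem wordLength_isAdjSwap_fin3 (τ : Perm (Fin 3)) : wordLength IsAdjSwap τ = kendallFin3 τ := by
  have nonzero : ∀ l : List (Perm (Fin 3)), l.prod = τ → τ ≠ 1 → 1 ≤ l.length :=
    fun l h hτ => one_le_length_of_prod_ne_one (h ▸ hτ)
  have swaps {l : List (Perm (Fin 3))} (hl : ∀ s ∈ l, IsAdjSwap s) : ∀ s ∈ l, s.IsSwap :=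
    fun s hs => (hl s hs).isSwap
  rcases perm_fin3_cases τ with rfl | rfl | rfl | rfl | rfl | rfl
  · exact wordLength_eq [] (by simp) rfl rfl fun _ _ _ => Nat.zero_le _
  · exact wordLength_eq [swap 1 2] (by simp [isAdjSwap_fin3_iff]) (by simp [p2]) rfl
      fun l _ h => nonzero l h (by decide)
  · exact wordLength_eq [swap 0 1] (by simp [isAdjSwap_fin3_iff]) (by simp [p3]) rfl
      fun l _ h => nonzero l h (by decide)
  · exact wordLength_eq [swap 0 1, swap 1 2] (by simp [isAdjSwap_fin3_iff]) (by simp [p4]) rfl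
      fun l hl h => two_le_length_of_sign_eq_one (swaps hl) (h ▸ by decide) (h ▸ by decide)
  · exact wordLength_eq [swap 1 2, swap 0 1] (by simp [isAdjSwap_fin3_iff]) (by simp [p5]) rfl
      fun l hl h => two_le_length_of_sign_eq_one (swaps hl) (h ▸ by decide) (h ▸ by decide)
  · exact wordLength_eq [swap 0 1, swap 1 2, swap 0 1] (by simp [isAdjSwap_fin3_iff])
      (by simp [p6]; decide) rfl fun l hl h => three_le_length_of_sign_eq_neg_one
        (fun _ => IsAdjSwap.isSwap) hl (h ▸ by simp [isAdjSwap_fin3_iff, p6]; decide)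
        (h ▸ by decide)

theorem dC_fin3 (π₁ π₂ : Perm (Fin 3)) : dC π₁ π₂ = cayleyFin3 (transcript π₁ π₂) :=
  wordLength_isSwap_fin3 _

theorem dK_fin3 (π₁ π₂ : Perm (Fin 3)) : dK π₁ π₂ = kendallFin3 (transcript π₁ π₂) :=
  wordLength_isAdjSwap_fin3 _

theorem dC_lt_three (π₁ π₂ : Perm (Fin 3)) : dC π₁ π₂ < 3 := by
  rw [dC_fin3, cayleyFin3]; split_ifs <;> norm_num

theorem dK_lt_four (π₁ π₂ : Perm (Fin 3)) : dK π₁ π₂ < 4 := by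
  rw [dK_fin3, kendallFin3]; split_ifs <;> norm_num

theorem patN_eq_opatternTree {N : ℕ} (σ : Perm (Fin N)) (t : ℕ) (h : t + 2 < N) :
    patN σ t h = opatternTree fun i : Fin 3 => σ ⟨t + i, by omega⟩ :=
  opattern_eq_opatternTree fun i j hij => by simpa [Fin.ext_iff] using σ.injective hij

theorem card_dC1_dC2 (k l : Fin 3) :
    Nat.card {σ : Perm (Fin 5) // dC1 σ = k ∧ dC2 σ = l} =
      2 * (!![1, 1, 3; 1, 5, 14; 3, 14, 18] : Matrix (Fin 3) (Fin 3) ℕ) k l := by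
  simp only [dC1, dC2, dC_fin3, patN_eq_opatternTree]
  rw [Nat.card_eq_fintype_card, Fintype.card_subtype]
  revert k l
  decide

theorem card_dK1_dK2 (k l : Fin 4) :
    Nat.card {σ : Perm (Fin 5) // dK1 σ = k ∧ dK2 σ = l} =
      2 * (!![1, 1, 3, 0; 1, 1, 7, 1; 3, 7, 18, 7; 0, 1, 7, 2] : Matrix (Fin 4) (Fin 4) ℕ)
        k l := by
  simp only [dK1, dK2, dK_fin3, patN_eq_opatternTree]
  rw [Nat.card_eq_fintype_card, Fintype.card_subtype]
  revert k l
  decide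

theorem sum_eq_sum_card_mul {α R : Type*} [Fintype α] [NonAssocSemiring R] {f g : α → ℕ}
    {a b : ℕ} (hf : ∀ x, f x < a) (hg : ∀ x, g x < b) (φ : ℕ → ℕ → R) :
    ∑ x, φ (f x) (g x) =
      ∑ k : Fin a, ∑ l : Fin b, (Nat.card {x // f x = k ∧ g x = l} : R) * φ k l := by
  classical
  let F : α → Fin a × Fin b := fun x => (⟨f x, hf x⟩, ⟨g x, hg x⟩)
  rw [← Finset.sum_fiberwise_of_maps_to (g := F) (t := Finset.univ) fun _ _ => Finset.mem_univ _,
    Fintype.sum_prod_type]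
  refine Finset.sum_congr rfl fun k _ => Finset.sum_congr rfl fun l _ => ?_
  have hF : ∀ x, F x = (k, l) ↔ f x = k ∧ g x = l := by simp [F, Prod.ext_iff, Fin.ext_iff]
  rw [Nat.card_eq_fintype_card, Fintype.card_subtype, ← nsmul_eq_mul, ← Finset.sum_const]
  exact Finset.sum_congr (by simp [hF]) fun x hx => by
    obtain ⟨hk, hl⟩ := (Finset.mem_filter.1 hx).2
    rw [hk, hl]

def lawMean {a b : ℕ} (p : Fin a → Fin b → ℝ) (φ : ℕ → ℕ → ℝ) : ℝ := ∑ k, ∑ l, p k l * φ k l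

def lawCov {a b : ℕ} (p : Fin a → Fin b → ℝ) (φ ψ : ℕ → ℕ → ℝ) : ℝ :=
  lawMean p fun k l => (φ k l - lawMean p φ) * (ψ k l - lawMean p ψ)

noncomputable def lawCorr {a b : ℕ} (p : Fin a → Fin b → ℝ) : ℝ :=
  lawCov p (fun k _ => k) (fun _ l => l) /
    (√(lawCov p (fun k _ => k) (fun k _ => k)) * √(lawCov p (fun _ l => l) (fun _ l => l)))

def IsJointLaw {a b : ℕ} (f g : Perm (Fin 5) → ℕ) (p : Fin a → Fin b → ℝ) : Prop :=
  ∀ (k : Fin a) (l : Fin b), (Nat.card {σ // f σ = k ∧ g σ = l} : ℝ) / 120 = p k l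

section JointLaw

variable {a b : ℕ} {f g : Perm (Fin 5) → ℕ} {p : Fin a → Fin b → ℝ}

theorem sum_div_eq_lawMean (hf : ∀ σ, f σ < a) (hg : ∀ σ, g σ < b)
    (hp : IsJointLaw f g p) (φ : ℕ → ℕ → ℝ) :
    (∑ σ, φ (f σ) (g σ)) / 120 = lawMean p φ := by
  simp only [sum_eq_sum_card_mul hf hg, Finset.sum_div, lawMean]
  exact Finset.sum_congr rfl fun k _ => Finset.sum_congr rfl fun l _ => by
    rw [← hp k l, div_mul_eq_mul_div]

theorem Cov_eq_lawCov (hf : ∀ σ, f σ < a) (hg : ∀ σ, g σ < b)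
    (hp : IsJointLaw f g p)
    {u v : Perm (Fin 5) → ℕ} {φ ψ : ℕ → ℕ → ℝ} (hu : ∀ σ, (u σ : ℝ) = φ (f σ) (g σ))
    (hv : ∀ σ, (v σ : ℝ) = ψ (f σ) (g σ)) : Cov u v = lawCov p φ ψ := by
  have hEu : EX u = lawMean p φ := by simp only [EX, hu]; exact sum_div_eq_lawMean hf hg hp φ
  have hEv : EX v = lawMean p ψ := by simp only [EX, hv]; exact sum_div_eq_lawMean hf hg hp ψ
  simp only [Cov, hEu, hEv, hu, hv]
  exact sum_div_eq_lawMean hf hg hp fun k l => (φ k l - lawMean p φ) * (ψ k l - lawMean p ψ)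

theorem correlation_eq_lawCorr (hf : ∀ σ, f σ < a) (hg : ∀ σ, g σ < b)
    (hp : IsJointLaw f g p) :
    Cov f g / (√(Cov f f) * √(Cov g g)) = lawCorr p := by
  let fst : ℕ → ℕ → ℝ := fun k _ => k
  let snd : ℕ → ℕ → ℝ := fun _ l => l
  rw [lawCorr, Cov_eq_lawCov (φ := fst) (ψ := snd) hf hg hp (fun _ => rfl) (fun _ => rfl),
    Cov_eq_lawCov (φ := fst) (ψ := fst) hf hg hp (fun _ => rfl) (fun _ => rfl),
    Cov_eq_lawCov (φ := snd) (ψ := snd) hf hg hp (fun _ => rfl) (fun _ => rfl)]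

end JointLaw

noncomputable def cayleyLaw : Fin 3 → Fin 3 → ℝ :=
  fun k l => (1/60 : ℝ) * !![1, 1, 3; 1, 5, 14; 3, 14, 18] k l

theorem lawCorr_cayleyLaw : lawCorr cayleyLaw = -2/25 := by
  have h₁₂ : lawCov cayleyLaw (fun k _ => k) (fun _ l => l) = -1/30 := by
    simp [lawCov, lawMean, cayleyLaw, Fin.sum_univ_three]; norm_num
  have h₁₁ : lawCov cayleyLaw (fun k _ => k) (fun k _ => k) = 5/12 := by
    simp [lawCov, lawMean, cayleyLaw, Fin.sum_univ_three]; norm_num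
  have h₂₂ : lawCov cayleyLaw (fun _ l => l) (fun _ l => l) = 5/12 := by
    simp [lawCov, lawMean, cayleyLaw, Fin.sum_univ_three]; norm_num
  rw [lawCorr, h₁₂, h₁₁, h₂₂, Real.mul_self_sqrt (by norm_num)]
  norm_num

noncomputable def kendallLaw : Fin 4 → Fin 4 → ℝ :=
  fun k l => (1/60 : ℝ) * !![1, 1, 3, 0; 1, 1, 7, 1; 3, 7, 18, 7; 0, 1, 7, 2] k l

theorem lawCorr_kendallLaw : lawCorr kendallLaw = 22/115 := by
  have h₁₂ : lawCov kendallLaw (fun k _ => k) (fun _ l => l) = 11/90 := by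
    simp [lawCov, lawMean, kendallLaw, Fin.sum_univ_four]; norm_num
  have h₁₁ : lawCov kendallLaw (fun k _ => k) (fun k _ => k) = 23/36 := by
    simp [lawCov, lawMean, kendallLaw, Fin.sum_univ_four]; norm_num
  have h₂₂ : lawCov kendallLaw (fun _ l => l) (fun _ l => l) = 23/36 := by
    simp [lawCov, lawMean, kendallLaw, Fin.sum_univ_four]; norm_num
  rw [lawCorr, h₁₂, h₁₁, h₂₂, Real.mul_self_sqrt (by norm_num)]
  norm_num

theorem isJointLaw_dC1_dC2 : IsJointLaw dC1 dC2 cayleyLaw := by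
  intro k l
  rw [card_dC1_dC2]
  fin_cases k <;> fin_cases l <;> norm_num [cayleyLaw]

theorem isJointLaw_dK1_dK2 : IsJointLaw dK1 dK2 kendallLaw := by
  intro k l
  rw [card_dK1_dK2]
  fin_cases k <;> fin_cases l <;> norm_num [kendallLaw]

/-- Joint lag-1 distribution of the Cayley distances `(1/60)·[[1,1,3],[1,5,14],[3,14,18]]`
with correlation `−2/25`, and of the Kendall distances
`(1/60)·[[1,1,3,0],[1,1,7,1],[3,7,18,7],[0,1,7,2]]` with correlation `22/115`. -/
theorem distance_biv1_iid :
    (∀ k l : Fin 3,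
      (Nat.card {σ : Perm (Fin 5) // dC1 σ = (k : ℕ) ∧ dC2 σ = (l : ℕ)} : ℝ) / 120 =
        (1/60 : ℝ) * !![1, 1, 3; 1, 5, 14; 3, 14, 18] k l) ∧
    Cov dC1 dC2 / (Real.sqrt (Cov dC1 dC1) * Real.sqrt (Cov dC2 dC2)) = -2/25 ∧
    (∀ k l : Fin 4,
      (Nat.card {σ : Perm (Fin 5) // dK1 σ = (k : ℕ) ∧ dK2 σ = (l : ℕ)} : ℝ) / 120 =
        (1/60 : ℝ) * !![1, 1, 3, 0; 1, 1, 7, 1; 3, 7, 18, 7; 0, 1, 7, 2] k l) ∧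
    Cov dK1 dK2 / (Real.sqrt (Cov dK1 dK1) * Real.sqrt (Cov dK2 dK2)) = 22/115 := by
  refine ⟨isJointLaw_dC1_dC2, ?_, isJointLaw_dK1_dK2, ?_⟩
  · exact (correlation_eq_lawCorr (fun _ => dC_lt_three _ _) (fun _ => dC_lt_three _ _)
      isJointLaw_dC1_dC2).trans lawCorr_cayleyLaw
  · exact (correlation_eq_lawCorr (fun _ => dK_lt_four _ _) (fun _ => dK_lt_four _ _)
      isJointLaw_dK1_dK2).trans lawCorr_kendallLaw
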